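/- (Correctness of the m-machine DP recurrence, related machines) Fix m ≥ 2, work amounts t : Fin n → ℕ, deadlines d : Fin n → ℚ with d nondecreasing, and speeds λ : Fin m → ℚ with λ μ > 0 (λ μ is the time machine μ takes per unit of work). For 0 ≤ i ≤ n and x : Fin (m−1) → ℚ, let F i x denote: there exists an assignment a of the first i jobs to the m machines such that for every μ < m−1 the total running time of machine μ, namely λ μ · ∑_{k < i, a k = μ} t k, equals x μ, and for every job j < i, λ (a j) · ∑_{k ≤ j, a k = a j} t k ≤ d j. Then for every 1 ≤ i ≤ n and every x: F i x holds if and only if either there exists μ < m−1 with λ μ · t (i−1) ≤ x μ, x μ ≤ d (i−1), and F (i−1) x' where x' agrees with x except x' μ = x μ − λ μ · t (i−1); or F (i−1) x holds and λ (m−1) · ((∑_{k < i} t k) − ∑_{μ < m−1} x μ / λ μ) ≤ d (i−1). -/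
import Mathlib


open Finset


lemma sum_split {n i : ℕ} (hi1 : 1 ≤ i) (p : Fin n) (hp : (p : ℕ) = i - 1)
    (f : Fin n → ℚ) (P : Fin n → Prop) [DecidablePred P] :
    ∑ k ∈ univ.filter (fun k : Fin n => (k : ℕ) < i ∧ P k), f k
      = (∑ k ∈ univ.filter (fun k : Fin n => (k : ℕ) < i - 1 ∧ P k), f k)
        + if P p then f p else 0 := by
  classical
  have hunion : univ.filter (fun k : Fin n => (k : ℕ) < i ∧ P k)
      = univ.filter (fun k : Fin n => (k : ℕ) < i - 1 ∧ P k)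
        ∪ univ.filter (fun k : Fin n => k = p ∧ P k) := by
    ext k
    simp only [mem_union, mem_filter, mem_univ, true_and]
    constructor
    · rintro ⟨h1, h2⟩
      by_cases hk : (k : ℕ) = i - 1
      · exact Or.inr ⟨Fin.ext (by omega), h2⟩
      · exact Or.inl ⟨by omega, h2⟩
    · rintro (⟨h1, h2⟩ | ⟨rfl, h2⟩)
      · exact ⟨by omega, h2⟩
      · exact ⟨by omega, h2⟩
  have hdisj : Disjoint (univ.filter (fun k : Fin n => (k : ℕ) < i - 1 ∧ P k))
      (univ.filter (fun k : Fin n => k = p ∧ P k)) := by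
    rw [Finset.disjoint_left]
    rintro k hk1 hk2
    simp only [mem_filter, mem_univ, true_and] at hk1 hk2
    rcases hk2 with ⟨rfl, -⟩
    have h := hk1.1
    omega
  rw [hunion, Finset.sum_union hdisj]
  congr 1
  by_cases hP : P p
  · have hset : univ.filter (fun k : Fin n => k = p ∧ P k) = {p} := by
      ext k
      simp only [mem_filter, mem_univ, true_and, mem_singleton]
      exact ⟨fun h => h.1, fun h => ⟨h, h ▸ hP⟩⟩
    rw [hset, Finset.sum_singleton, if_pos hP]
  · have hset : univ.filter (fun k : Fin n => k = p ∧ P k) = ∅ := by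
      ext k
      simp only [mem_filter, mem_univ, true_and, Finset.notMem_empty, iff_false]
      rintro ⟨rfl, h⟩
      exact hP h
    rw [hset, Finset.sum_empty, if_neg hP]

lemma sum_partition {n m i : ℕ} (a : Fin n → Fin m) (f : Fin n → ℚ) :
    ∑ k ∈ univ.filter (fun k : Fin n => (k : ℕ) < i), f k
      = ∑ ν ∈ Finset.range m,
          ∑ k ∈ univ.filter (fun k : Fin n => (k : ℕ) < i ∧ (a k : ℕ) = ν), f k := by
  classical
  have h := Finset.sum_fiberwise_of_maps_to
    (s := univ.filter (fun k : Fin n => (k : ℕ) < i)) (t := Finset.range m)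
    (g := fun k => (a k : ℕ)) (fun k _ => Finset.mem_range.mpr (a k).isLt) f
  simp only [Finset.filter_filter] at h
  rw [← h]

lemma filter_last {n m i : ℕ} (hi1 : 1 ≤ i) (p : Fin n) (hp : (p : ℕ) = i - 1)
    (a : Fin n → Fin m) (v : Fin m) :
    univ.filter (fun k : Fin n => k ≤ p ∧ a k = v)
      = univ.filter (fun k : Fin n => (k : ℕ) < i ∧ (a k : ℕ) = (v : ℕ)) := by
  ext k
  simp only [mem_filter, mem_univ, true_and, Fin.le_def, Fin.ext_iff]
  omega

/-- Total work on the last machine equals total work minus the work on the other machines. -/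
lemma last_load {n m i : ℕ} (hm : 2 ≤ m) (t : Fin n → ℕ)
    (lam : Fin m → ℚ) (hlam : ∀ μ, 0 < lam μ) (a : Fin n → Fin m) (x : Fin (m - 1) → ℚ)
    (hL : ∀ μ' : Fin (m - 1),
      lam (Fin.castLE (Nat.sub_le m 1) μ') *
        ∑ k ∈ univ.filter (fun k : Fin n => (k : ℕ) < i ∧ (a k : ℕ) = (μ' : ℕ)), (t k : ℚ)
        = x μ') :
    ∑ k ∈ univ.filter (fun k : Fin n => (k : ℕ) < i ∧ (a k : ℕ) = m - 1), (t k : ℚ)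
      = (∑ k ∈ univ.filter (fun k : Fin n => (k : ℕ) < i), (t k : ℚ))
        - ∑ μ' : Fin (m - 1), x μ' / lam (Fin.castLE (Nat.sub_le m 1) μ') := by
  classical
  set S : ℕ → ℚ :=
    fun ν => ∑ k ∈ univ.filter (fun k : Fin n => (k : ℕ) < i ∧ (a k : ℕ) = ν), (t k : ℚ)
    with hSdef
  have hpart := sum_partition (i := i) a (fun k => (t k : ℚ))
  have hm1 : m - 1 + 1 = m := by omega
  have hsucc : ∑ ν ∈ Finset.range m, S ν
      = (∑ ν ∈ Finset.range (m - 1), S ν) + S (m - 1) := by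
    conv_lhs => rw [← hm1]
    rw [Finset.sum_range_succ]
  have hSx : ∀ μ' : Fin (m - 1),
      S (μ' : ℕ) = x μ' / lam (Fin.castLE (Nat.sub_le m 1) μ') := by
    intro μ'
    have h := hL μ'
    rw [eq_div_iff (ne_of_gt (hlam _))]
    linarith [h]
  have hrange : ∑ ν ∈ Finset.range (m - 1), S ν
      = ∑ μ' : Fin (m - 1), x μ' / lam (Fin.castLE (Nat.sub_le m 1) μ') := by
    rw [← Fin.sum_univ_eq_sum_range (fun ν => S ν) (m - 1)]
    exact Finset.sum_congr rfl fun μ' _ => hSx μ'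
  have : ∑ k ∈ univ.filter (fun k : Fin n => (k : ℕ) < i), (t k : ℚ)
      = (∑ μ' : Fin (m - 1), x μ' / lam (Fin.castLE (Nat.sub_le m 1) μ')) + S (m - 1) := by
    rw [hpart, hsucc, hrange]
  linarith [this]

/-- `F n m t d lam i x`: there is an assignment of the first `i` jobs (indices `< i`) to
the `m` related machines (machine `μ` takes `lam μ` time per unit of work) such that for
every machine `μ < m - 1` its total running time `lam μ * (total work assigned to μ)` is
exactly `x μ`, and each of the first `i` jobs (processed in increasing index order on its
machine) finishes by its deadline. -/
def F (n m : ℕ) (t : Fin n → ℕ) (d : Fin n → ℚ) (lam : Fin m → ℚ) (i : ℕ)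
    (x : Fin (m - 1) → ℚ) : Prop :=
  ∃ a : Fin n → Fin m,
    (∀ μ : Fin (m - 1),
      lam (Fin.castLE (Nat.sub_le m 1) μ) *
        ∑ k ∈ univ.filter (fun k : Fin n => (k : ℕ) < i ∧ (a k : ℕ) = (μ : ℕ)), (t k : ℚ) = x μ) ∧
    ∀ j : Fin n, (j : ℕ) < i →
      lam (a j) * ∑ k ∈ univ.filter (fun k => k ≤ j ∧ a k = a j), (t k : ℚ) ≤ d j

/-- Correctness of the `m`-machine DP recurrence for related machines. -/
theorem m_machine_dp_recurrence_related (n m : ℕ) (hm : 2 ≤ m) (t : Fin n → ℕ)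
    (d : Fin n → ℚ) (hd : Monotone d) (lam : Fin m → ℚ) (hlam : ∀ μ, 0 < lam μ)
    (i : ℕ) (hi1 : 1 ≤ i) (hin : i ≤ n) (x : Fin (m - 1) → ℚ) :
    F n m t d lam i x ↔
      ((∃ μ : Fin (m - 1),
          lam (Fin.castLE (Nat.sub_le m 1) μ) * (t ⟨i - 1, by omega⟩ : ℚ) ≤ x μ ∧
          x μ ≤ d ⟨i - 1, by omega⟩ ∧
          F n m t d lam (i - 1)
            (Function.update x μ
              (x μ - lam (Fin.castLE (Nat.sub_le m 1) μ) * (t ⟨i - 1, by omega⟩ : ℚ)))) ∨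
       (F n m t d lam (i - 1) x ∧
          lam ⟨m - 1, by omega⟩ *
            ((∑ k ∈ univ.filter (fun k : Fin n => (k : ℕ) < i), (t k : ℚ)) -
              ∑ μ : Fin (m - 1), x μ / lam (Fin.castLE (Nat.sub_le m 1) μ))
            ≤ d ⟨i - 1, by omega⟩)) := by
  classical
  have hn : 1 ≤ n := le_trans hi1 hin
  set p : Fin n := ⟨i - 1, by omega⟩ with hpdef
  have hp : (p : ℕ) = i - 1 := rfl
  constructor
  · rintro ⟨a, hload, hdl⟩
    by_cases hν : (a p : ℕ) < m - 1
    -- last job runs on one of the first m-1 machines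
    · left
      refine ⟨⟨(a p : ℕ), hν⟩, ?_, ?_, ?_⟩
      all_goals
        have hcast : Fin.castLE (Nat.sub_le m 1) (⟨(a p : ℕ), hν⟩ : Fin (m - 1)) = a p :=
          Fin.ext rfl
      · -- lam * t(i-1) ≤ x μ
        have hsplit := sum_split hi1 p hp (fun k => (t k : ℚ))
          (fun k => (a k : ℕ) = ((⟨(a p : ℕ), hν⟩ : Fin (m - 1)) : ℕ))
        rw [if_pos rfl] at hsplit
        have hS := hload ⟨(a p : ℕ), hν⟩
        rw [hsplit] at hS
        have hS' : (0:ℚ) ≤ ∑ k ∈ univ.filter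
            (fun k : Fin n => (k : ℕ) < i - 1 ∧ (a k : ℕ) = ((⟨(a p : ℕ), hν⟩ : Fin (m - 1)) : ℕ)),
            (t k : ℚ) := Finset.sum_nonneg fun k _ => by positivity
        have hlamp := hlam (a p)
        have hS'' := mul_nonneg hlamp.le hS'
        rw [mul_add] at hS
        rw [hcast] at hS ⊢
        show lam (a p) * ((t p : ℕ) : ℚ) ≤ x ⟨(a p : ℕ), hν⟩
        linarith
      · -- x μ ≤ d (i-1)
        have h2 := hdl p (by omega)
        rw [filter_last hi1 p hp a (a p)] at h2
        have hS := hload ⟨(a p : ℕ), hν⟩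
        rw [hcast] at hS
        show x ⟨(a p : ℕ), hν⟩ ≤ d p
        calc x ⟨(a p : ℕ), hν⟩ = _ := hS.symm
          _ ≤ d p := h2
      · -- F (i-1) with reduced load
        refine ⟨a, fun μ' => ?_, fun j hj => hdl j (by omega)⟩
        by_cases hμ' : μ' = ⟨(a p : ℕ), hν⟩
        · rw [hμ', Function.update_self]
          have hsplit := sum_split hi1 p hp (fun k => (t k : ℚ))
            (fun k => (a k : ℕ) = ((⟨(a p : ℕ), hν⟩ : Fin (m - 1)) : ℕ))
          rw [if_pos rfl] at hsplit
          have hS := hload ⟨(a p : ℕ), hν⟩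
          rw [hsplit, mul_add] at hS
          rw [hcast] at hS ⊢
          show lam (a p) * ∑ k ∈ univ.filter
              (fun k : Fin n => (k : ℕ) < i - 1 ∧ (a k : ℕ) = ((⟨(a p : ℕ), hν⟩ : Fin (m - 1)) : ℕ)),
              (t k : ℚ)
            = x ⟨(a p : ℕ), hν⟩ - lam (a p) * ((t p : ℕ) : ℚ)
          linarith
        · rw [Function.update_of_ne hμ']
          have hsplit := sum_split hi1 p hp (fun k => (t k : ℚ))
            (fun k => (a k : ℕ) = (μ' : ℕ))
          rw [if_neg (fun h => hμ' (Fin.ext h.symm)), add_zero] at hsplit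
          rw [← hsplit]
          exact hload μ'
    -- last job runs on the last machine
    · have hν' : (a p : ℕ) = m - 1 := by have := (a p).isLt; omega
      right
      constructor
      · refine ⟨a, fun μ' => ?_, fun j hj => hdl j (by omega)⟩
        have hsplit := sum_split hi1 p hp (fun k => (t k : ℚ))
          (fun k => (a k : ℕ) = (μ' : ℕ))
        rw [if_neg (by have := μ'.isLt; omega), add_zero] at hsplit
        rw [← hsplit]
        exact hload μ'
      · have hlast := last_load (i := i) hm t lam hlam a x hload
        have h2 := hdl p (by omega)
        rw [filter_last hi1 p hp a (a p)] at h2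
        rw [hν'] at h2
        have hap : a p = ⟨m - 1, by omega⟩ := Fin.ext hν'
        rw [hap] at h2
        rw [← hlast]
        exact h2
  · rintro (⟨μ, h1, h2, hF⟩ | ⟨hF, hineq⟩)
    -- schedule last job on machine μ
    · obtain ⟨a', hload', hdl'⟩ := hF
      set a : Fin n → Fin m := Function.update a' p (Fin.castLE (Nat.sub_le m 1) μ) with ha
      have hap : a p = Fin.castLE (Nat.sub_le m 1) μ := Function.update_self _ _ _
      have hak : ∀ k : Fin n, (k : ℕ) < i - 1 → a k = a' k := by
        intro k hk
        have hkp : k ≠ p := by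
          intro h
          rw [h] at hk
          omega
        exact Function.update_of_ne hkp _ _
      have hfeq : ∀ c : ℕ, univ.filter (fun k : Fin n => (k : ℕ) < i - 1 ∧ (a k : ℕ) = c)
          = univ.filter (fun k : Fin n => (k : ℕ) < i - 1 ∧ (a' k : ℕ) = c) := by
        intro c
        apply Finset.filter_congr
        intro k _
        constructor
        · rintro ⟨hk, hc⟩; exact ⟨hk, by rw [← hak k hk]; exact hc⟩
        · rintro ⟨hk, hc⟩; exact ⟨hk, by rw [hak k hk]; exact hc⟩
      have hL : ∀ μ' : Fin (m - 1),
          lam (Fin.castLE (Nat.sub_le m 1) μ') *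
            ∑ k ∈ univ.filter (fun k : Fin n => (k : ℕ) < i ∧ (a k : ℕ) = (μ' : ℕ)), (t k : ℚ)
            = x μ' := by
        intro μ'
        rw [sum_split hi1 p hp (fun k => (t k : ℚ)) (fun k => (a k : ℕ) = (μ' : ℕ)),
          hfeq (μ' : ℕ)]
        by_cases hμ' : μ' = μ
        · rw [hμ']
          rw [if_pos (by rw [hap]; rfl)]
          have h := hload' μ
          rw [Function.update_self] at h
          rw [mul_add, h]
          show x μ - lam (Fin.castLE (Nat.sub_le m 1) μ) * ((t p : ℕ) : ℚ)
              + lam (Fin.castLE (Nat.sub_le m 1) μ) * ((t p : ℕ) : ℚ) = x μ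
          ring
        · rw [if_neg (by rw [hap]; exact fun h => hμ' (Fin.ext h.symm)), add_zero]
          have h := hload' μ'
          rw [Function.update_of_ne hμ'] at h
          exact h
      refine ⟨a, hL, ?_⟩
      intro j hj
      by_cases hj' : (j : ℕ) < i - 1
      · have hja : a j = a' j := hak j hj'
        have hset : univ.filter (fun k : Fin n => k ≤ j ∧ a k = a j)
            = univ.filter (fun k : Fin n => k ≤ j ∧ a' k = a' j) := by
          apply Finset.filter_congr
          intro k _
          have hk : k ≤ j → a k = a' k := fun hkj => hak k (lt_of_le_of_lt hkj hj')
          constructor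
          · rintro ⟨hkj, he⟩; exact ⟨hkj, by rw [← hk hkj, ← hja]; exact he⟩
          · rintro ⟨hkj, he⟩; exact ⟨hkj, by rw [hk hkj, hja]; exact he⟩
        rw [hset, hja]
        exact hdl' j hj'
      · have hjp : j = p := Fin.ext (by omega)
        subst hjp
        rw [hap, filter_last hi1 p hp a (Fin.castLE (Nat.sub_le m 1) μ)]
        have hx := hL μ
        calc lam (Fin.castLE (Nat.sub_le m 1) μ) *
            ∑ k ∈ univ.filter (fun k : Fin n => (k : ℕ) < i ∧
              (a k : ℕ) = ((Fin.castLE (Nat.sub_le m 1) μ : Fin m) : ℕ)), (t k : ℚ)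
            = x μ := hx
          _ ≤ d p := h2
    -- schedule last job on the last machine
    · obtain ⟨a', hload', hdl'⟩ := hF
      set a : Fin n → Fin m := Function.update a' p ⟨m - 1, by omega⟩ with ha
      have hap : a p = ⟨m - 1, by omega⟩ := Function.update_self _ _ _
      have hak : ∀ k : Fin n, (k : ℕ) < i - 1 → a k = a' k := by
        intro k hk
        have hkp : k ≠ p := by
          intro h
          rw [h] at hk
          omega
        exact Function.update_of_ne hkp _ _
      have hfeq : ∀ c : ℕ, univ.filter (fun k : Fin n => (k : ℕ) < i - 1 ∧ (a k : ℕ) = c)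
          = univ.filter (fun k : Fin n => (k : ℕ) < i - 1 ∧ (a' k : ℕ) = c) := by
        intro c
        apply Finset.filter_congr
        intro k _
        constructor
        · rintro ⟨hk, hc⟩; exact ⟨hk, by rw [← hak k hk]; exact hc⟩
        · rintro ⟨hk, hc⟩; exact ⟨hk, by rw [hak k hk]; exact hc⟩
      have hL : ∀ μ' : Fin (m - 1),
          lam (Fin.castLE (Nat.sub_le m 1) μ') *
            ∑ k ∈ univ.filter (fun k : Fin n => (k : ℕ) < i ∧ (a k : ℕ) = (μ' : ℕ)), (t k : ℚ)
            = x μ' := by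
        intro μ'
        rw [sum_split hi1 p hp (fun k => (t k : ℚ)) (fun k => (a k : ℕ) = (μ' : ℕ)),
          hfeq (μ' : ℕ)]
        rw [if_neg (by rw [hap]; have := μ'.isLt; simp; omega), add_zero]
        exact hload' μ'
      refine ⟨a, hL, ?_⟩
      intro j hj
      by_cases hj' : (j : ℕ) < i - 1
      · have hja : a j = a' j := hak j hj'
        have hset : univ.filter (fun k : Fin n => k ≤ j ∧ a k = a j)
            = univ.filter (fun k : Fin n => k ≤ j ∧ a' k = a' j) := by
          apply Finset.filter_congr
          intro k _
          have hk : k ≤ j → a k = a' k := fun hkj => hak k (lt_of_le_of_lt hkj hj')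
          constructor
          · rintro ⟨hkj, he⟩; exact ⟨hkj, by rw [← hk hkj, ← hja]; exact he⟩
          · rintro ⟨hkj, he⟩; exact ⟨hkj, by rw [hk hkj, hja]; exact he⟩
        rw [hset, hja]
        exact hdl' j hj'
      · have hjp : j = p := Fin.ext (by omega)
        subst hjp
        rw [hap, filter_last hi1 p hp a (⟨m - 1, by omega⟩ : Fin m)]
        have hlast := last_load (i := i) hm t lam hlam a x hL
        have hmv : (((⟨m - 1, by omega⟩ : Fin m)) : ℕ) = m - 1 := rfl
        rw [hmv, hlast]
        exact hineq
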